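/- Let g = g_{5,3,6(λ)}. For every F ∈ g*, the skew-symmetric bilinear form B_F has rank either 0 or 2; equivalently, the subspace {X ∈ g : F([X, Y]) = 0 for all Y ∈ g} has dimension 5 or 3. (This is the infinitesimal MD-condition: every coadjoint orbit of the corresponding connected simply connected Lie group G_{5,3,6(λ)} has dimension 0 or 2, so it is an MD5-group.) -/

import Mathlib

open scoped Matrix

/-- The Lie bracket of g_{5,3,6(λ)}: [X1,X2] = X3, [X2,X3] = X3, [X2,X4] = X3 + X4, [X2,X5] = λ·X5,
written in coordinates with respect to the basis (X₁, X₂, X₃, X₄, X₅) (all other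
brackets of basis vectors vanish); it is the bilinear extension of the structure
constants above. -/
def bracketg536 (l : ℝ) (U V : Fin 5 → ℝ) : Fin 5 → ℝ :=
  ![0, 0,
    (U 0 * V 1 - U 1 * V 0) + (U 1 * V 2 - U 2 * V 1) + (U 1 * V 3 - U 3 * V 1),
    U 1 * V 3 - U 3 * V 1,
    l * (U 1 * V 4 - U 4 * V 1)]

/-- The matrix (in the basis (X₁, ..., X₅)) of the skew-symmetric bilinear form
B_F(X, Y) = F([X, Y]); the functional F is identified with its coordinate vector with
respect to the dual basis, acting by the dot product. -/
def BFg536 (l : ℝ) (F : Fin 5 → ℝ) : Matrix (Fin 5) (Fin 5) ℝ :=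
  Matrix.of fun i j => F ⬝ᵥ bracketg536 l (Pi.single i 1) (Pi.single j 1)

/-- The radical {X ∈ g | F([X, Y]) = 0 for all Y ∈ g} of the form B_F, as a subspace. -/
def radg536 (l : ℝ) (F : Fin 5 → ℝ) : Submodule ℝ (Fin 5 → ℝ) where
  carrier := {X | ∀ Y : Fin 5 → ℝ, F ⬝ᵥ bracketg536 l X Y = 0}
  zero_mem' := by
    intro Y
    simp [bracketg536, dotProduct, Fin.sum_univ_five]
  add_mem' := by
    intro a b ha hb Y
    have h1 := ha Y
    have h2 := hb Y
    simp only [bracketg536, dotProduct, Fin.sum_univ_five, Matrix.cons_val_zero,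
      Matrix.cons_val_one, Matrix.head_cons, Matrix.cons_val_two, Matrix.tail_cons,
      Matrix.cons_val_three, Matrix.cons_val_four, Pi.add_apply] at h1 h2 ⊢
    linear_combination h1 + h2
  smul_mem' := by
    intro c a ha Y
    have h1 := ha Y
    simp only [bracketg536, dotProduct, Fin.sum_univ_five, Matrix.cons_val_zero,
      Matrix.cons_val_one, Matrix.head_cons, Matrix.cons_val_two, Matrix.tail_cons,
      Matrix.cons_val_three, Matrix.cons_val_four, Pi.smul_apply, smul_eq_mul] at h1 ⊢
    linear_combination c * h1
/-!
Every bracket in g_{5,3,6(λ)} involves the X₂-coordinate, and indeed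
F([X, Y]) = ψ(X) y₂ − x₂ ψ(Y) for the linear form ψ(X) = F₃(x₁ − x₃) − (F₃ + F₄) x₄ − λ F₅ x₅.
So B_F is the wedge product ψ ∧ x₂, of rank 2 when ψ and x₂ are linearly independent and
of rank 0 otherwise. The radical of B_F is the kernel of its matrix, hence has dimension
5 − rank by rank–nullity.
-/

open Matrix Module

section Wedge

variable {K m n : Type*} [Field K]

def wedgeMatrix (u w : n → K) : Matrix n n K := vecMulVec u w - vecMulVec w u

lemma wedgeMatrix_apply (u w : n → K) (i j : n) :
    wedgeMatrix u w i j = u i * w j - w i * u j := rfl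

lemma wedgeMatrix_eq_zero_of_not_linearIndependent {u w : n → K}
    (h : ¬ LinearIndependent K ![u, w]) : wedgeMatrix u w = 0 := by
  rw [LinearIndependent.pair_iff] at h
  push Not at h
  obtain ⟨s, t, hst, hne⟩ := h
  ext i j
  have hi : s * u i + t * w i = 0 := by simpa using congrFun hst i
  have hj : s * u j + t * w j = 0 := by simpa using congrFun hst j
  have hs : s * wedgeMatrix u w i j = 0 := by
    rw [wedgeMatrix_apply]
    linear_combination w j * hi - w i * hj
  have ht : t * wedgeMatrix u w i j = 0 := by
    rw [wedgeMatrix_apply]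
    linear_combination u i * hj - u j * hi
  by_cases hs0 : s = 0
  · exact (mul_eq_zero.mp ht).resolve_left (hne hs0)
  · exact (mul_eq_zero.mp hs).resolve_left hs0

variable [Fintype n]

lemma Matrix.rank_add_finrank_ker_mulVecLin (A : Matrix m n K) :
    A.rank + finrank K (LinearMap.ker A.mulVecLin) = Fintype.card n := by
  rw [Matrix.rank, LinearMap.finrank_range_add_finrank_ker, finrank_fintype_fun_eq_card]

lemma wedgeMatrix_mulVec (u w X : n → K) :
    wedgeMatrix u w *ᵥ X = (w ⬝ᵥ X) • u - (u ⬝ᵥ X) • w := by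
  simp [wedgeMatrix, Matrix.sub_mulVec, vecMulVec_mulVec]

lemma ker_wedgeMatrix_of_linearIndependent {u w : n → K} (h : LinearIndependent K ![u, w]) :
    LinearMap.ker (wedgeMatrix u w).mulVecLin = LinearMap.ker (of ![u, w]).mulVecLin := by
  ext X
  simp only [LinearMap.mem_ker, mulVecLin_apply, wedgeMatrix_mulVec]
  constructor
  · intro hX
    obtain ⟨hw, hu⟩ := LinearIndependent.pair_iff.mp h (w ⬝ᵥ X) (-(u ⬝ᵥ X))
      (by rw [neg_smul, ← sub_eq_add_neg, hX])
    ext i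
    fin_cases i <;> simp [mulVec, hw, neg_eq_zero.mp hu]
  · intro hX
    have hu : u ⬝ᵥ X = 0 := by simpa [mulVec] using congrFun hX 0
    have hw : w ⬝ᵥ X = 0 := by simpa [mulVec] using congrFun hX 1
    simp [hu, hw]

lemma rank_wedgeMatrix (u w : n → K) :
    (wedgeMatrix u w).rank = 0 ∨ (wedgeMatrix u w).rank = 2 := by
  by_cases h : LinearIndependent K ![u, w]
  · have hrows : (of ![u, w]).rank = 2 := h.rank_matrix
    have hwedge := (wedgeMatrix u w).rank_add_finrank_ker_mulVecLin
    have hpair := (of ![u, w]).rank_add_finrank_ker_mulVecLin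
    rw [ker_wedgeMatrix_of_linearIndependent h] at hwedge
    omega
  · rw [wedgeMatrix_eq_zero_of_not_linearIndependent h, rank_zero]
    exact Or.inl rfl

end Wedge

-- Coordinates are 0-indexed: `F 2` is F₃, and `X 1` (i.e. `Pi.single 1 1 ⬝ᵥ X`) is x₂.
def psig536 (l : ℝ) (F : Fin 5 → ℝ) : Fin 5 → ℝ :=
  ![F 2, 0, -F 2, -(F 2 + F 3), -(l * F 4)]

lemma BFg536_eq_wedgeMatrix (l : ℝ) (F : Fin 5 → ℝ) :
    BFg536 l F = wedgeMatrix (psig536 l F) (Pi.single 1 1) := by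
  ext i j
  fin_cases i <;> fin_cases j <;>
    simp [BFg536, bracketg536, wedgeMatrix_apply, psig536, dotProduct, Fin.sum_univ_five] <;> ring

lemma dotProduct_bracketg536 (l : ℝ) (F X Y : Fin 5 → ℝ) :
    F ⬝ᵥ bracketg536 l X Y = -(BFg536 l F *ᵥ X ⬝ᵥ Y) := by
  simp [BFg536_eq_wedgeMatrix, wedgeMatrix_mulVec, bracketg536, psig536, dotProduct,
    Fin.sum_univ_five]
  ring

lemma radg536_eq_ker (l : ℝ) (F : Fin 5 → ℝ) :
    radg536 l F = LinearMap.ker (BFg536 l F).mulVecLin := by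
  ext X
  change (∀ Y, F ⬝ᵥ bracketg536 l X Y = 0) ↔ _
  simp only [dotProduct_bracketg536, neg_eq_zero, dotProduct_eq_zero_iff, LinearMap.mem_ker,
    mulVecLin_apply]

theorem md_condition_g536_general (l : ℝ) (F : Fin 5 → ℝ) :
    ((BFg536 l F).rank = 0 ∨ (BFg536 l F).rank = 2) ∧
    (Module.finrank ℝ (radg536 l F) = 5 ∨ Module.finrank ℝ (radg536 l F) = 3) := by
  have hsum := (BFg536 l F).rank_add_finrank_ker_mulVecLin
  rw [← radg536_eq_ker, Fintype.card_fin] at hsum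
  have hrank := BFg536_eq_wedgeMatrix l F ▸ rank_wedgeMatrix (psig536 l F) (Pi.single 1 1)
  omega

/-- For every functional F, the skew-symmetric form B_F has rank 0 or 2; equivalently,
its radical {X | F([X, Y]) = 0 for all Y} has dimension 5 or 3 (the infinitesimal
MD-condition: every coadjoint orbit has dimension 0 or 2). -/
theorem md_condition_g536 (l : ℝ) (hl0 : l ≠ 0) (hl1 : l ≠ 1) (F : Fin 5 → ℝ) :
    ((BFg536 l F).rank = 0 ∨ (BFg536 l F).rank = 2) ∧
    (Module.finrank ℝ (radg536 l F) = 5 ∨ Module.finrank ℝ (radg536 l F) = 3) :=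
  md_condition_g536_general l F
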